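/- Let M(z) = b/(cz + d) with b, c ≠ 0. Then Stirling's method equals St_M(z) = z + ((cz+d)² - bc)²/(c(cz+d)³), which is a rational map of degree 4. -/

import Mathlib

/-!
The derivative of `M z = b / (c z + d)` is `-(b c) / (c z + d)²` everywhere, even at the pole,
where both sides are `0` (`deriv` of a non-differentiable function and division by zero).
Since `c (z - M z) + d = ((c z + d)² - b c) / (c z + d)`, Stirling's step collapses to
`z + ((c z + d)² - b c)² / (c (c z + d)³)`. With `L = c X + d`, the numerator is
`X · D + (L² - b c)²` for the denominator `D = c L³`, and `L² - b c ≡ -b c` is a unit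
modulo `L`, so numerator and denominator are coprime.
-/

section Derivative

variable {𝕜 : Type*} [NontriviallyNormedField 𝕜]

theorem deriv_div_linear (b c d w : 𝕜) :
    deriv (fun z => b / (c * z + d)) w = -(b * c) / (c * w + d) ^ 2 := by
  have hinv : deriv (fun z => (c * z + d)⁻¹) w = -c / (c * w + d) ^ 2 := by
    rw [deriv_comp_mul_left c (fun y => (y + d)⁻¹) w, deriv_comp_add_const, deriv_inv,
      smul_eq_mul]
    ring
  simp_rw [div_eq_mul_inv b]
  rw [deriv_const_mul_field, hinv]
  ring

noncomputable def stirling (M : 𝕜 → 𝕜) (z : 𝕜) : 𝕜 :=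
  z - M z / deriv M (z - M z)

theorem stirling_div_linear {b c d z : 𝕜} (hb : b ≠ 0) (hc : c ≠ 0) (hz : c * z + d ≠ 0) :
    stirling (fun z => b / (c * z + d)) z =
      z + ((c * z + d) ^ 2 - b * c) ^ 2 / (c * (c * z + d) ^ 3) := by
  have hstep : c * (z - b / (c * z + d)) + d = ((c * z + d) ^ 2 - b * c) / (c * z + d) := by
    field_simp
    ring
  rw [stirling, deriv_div_linear, hstep, div_div_eq_mul_div]
  field_simp
  ring

end Derivative

section Coprime

variable {A : Type*} [CommRing A]

theorem isCoprime_sq_sub_of_isUnit {u : A} (hu : IsUnit u) (L : A) :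
    IsCoprime (L ^ 2 - u) L := by
  have h : IsCoprime (-u) L := isCoprime_one_left.of_isCoprime_of_dvd_left hu.neg.dvd
  convert h.add_mul_left_left L using 1
  ring

theorem isCoprime_mul_pow_add_sq_sub_pow {u v : A} (hu : IsUnit u) (hv : IsUnit v) (x L : A)
    (m n : ℕ) : IsCoprime (v * x * L ^ n + (L ^ 2 - u) ^ m) (v * L ^ n) := by
  have h : IsCoprime ((L ^ 2 - u) ^ m) (v * L ^ n) :=
    (isCoprime_mul_unit_left_right hv _ _).2 (isCoprime_sq_sub_of_isUnit hu L).pow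
  convert h.add_mul_left_left x using 1
  ring

end Coprime

open Polynomial in
/-- For `M z = b/(cz + d)` with `b, c ≠ 0`, Stirling's method equals
`St_M z = z + ((cz+d)² - bc)²/(c(cz+d)³)`, a rational map of degree 4
(numerator of degree 4, denominator of degree 3, coprime). -/
theorem stirling_mobius_a_zero_formula_degree (b c d : ℂ) (hb : b ≠ 0)
    (hc : c ≠ 0) :
    let M : ℂ → ℂ := fun z => b / (c * z + d)
    let St : ℂ → ℂ := fun z => z - M z / deriv M (z - M z)
    let N : Polynomial ℂ :=
      C c * X * (C c * X + C d) ^ 3 + ((C c * X + C d) ^ 2 - C (b * c)) ^ 2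
    let D : Polynomial ℂ := C c * (C c * X + C d) ^ 3
    (∀ z : ℂ, c * z + d ≠ 0 →
        St z = z + ((c * z + d) ^ 2 - b * c) ^ 2 / (c * (c * z + d) ^ 3)) ∧
      (∀ z : ℂ, c * z + d ≠ 0 → St z = N.eval z / D.eval z) ∧
      N.natDegree = 4 ∧ D.natDegree = 3 ∧ IsCoprime N D := by
  intro M St N D
  have hSt (z : ℂ) (hz : c * z + d ≠ 0) :
      St z = z + ((c * z + d) ^ 2 - b * c) ^ 2 / (c * (c * z + d) ^ 3) :=
    stirling_div_linear hb hc hz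
  refine ⟨hSt, fun z hz => ?_, ?_, ?_, ?_⟩
  · simp only [hSt z hz, N, D, eval_add, eval_mul, eval_pow, eval_sub, eval_C, eval_X]
    have hD : c * (c * z + d) ^ 3 ≠ 0 := mul_ne_zero hc (pow_ne_zero 3 hz)
    rw [eq_div_iff hD, add_mul, div_mul_cancel₀ _ hD]
    ring
  · simp only [N]
    compute_degree!
    ring_nf
    exact mul_ne_zero (pow_ne_zero 4 hc) two_ne_zero
  · simp only [D]
    compute_degree!
  · exact isCoprime_mul_pow_add_sq_sub_pow (isUnit_C.2 (mul_ne_zero hb hc).isUnit)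
      (isUnit_C.2 hc.isUnit) X _ 2 3
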